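/- For every subset Σ of ℕ \ {0,1} with 1 ≤ |Σ| ≤ 3, there exists a numerical semigroup T (a submonoid of ℕ with finite complement) and an element x ∈ T such that the set of lengths of factorizations of x into atoms of T equals Σ. -/

import Mathlib

/-- `a` is an atom of the additive submonoid `T` of `ℕ`: a nonzero element of `T`
that is not a sum of two nonzero elements of `T`. -/
def NumAtom (T : AddSubmonoid ℕ) (a : ℕ) : Prop :=
  a ∈ T ∧ a ≠ 0 ∧ ¬ ∃ b c : ℕ, b ∈ T ∧ c ∈ T ∧ b ≠ 0 ∧ c ≠ 0 ∧ a = b + c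

/-- `AS T x` is the set of lengths of factorizations of `x` into atoms of `T`:
the set of `m : ℕ` such that `x` is a sum of `m` atoms of `T`. -/
def AS (T : AddSubmonoid ℕ) (x : ℕ) : Set ℕ :=
  { m | ∃ s : Multiset ℕ, (∀ a ∈ s, NumAtom T a) ∧ Multiset.card s = m ∧ s.sum = x }

/-!
Vectors of `ℕ³` are encoded as three-digit numerals in base `B = c² + 1`. In `ℕ³`, the vectors
`(1,1,1), (1,1,0), (1,0,1), (c-a, c-a, c), (c-b, c, c-b)` are atoms of the monoid they generate,
and `(c,c,c)` factors only as `c • (1,1,1)`, `a • (1,1,0) + (c-a, c-a, c)` or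
`b • (1,0,1) + (c-b, c, c-b)`: comparing coordinates forces the number of copies of `(1,1,0)`
(resp. `(1,0,1)`) to be `a` (resp. `b`) times that of the fourth (resp. fifth) vector, and then
the coordinate sums leave only these three solutions. A sum of at most `c` generators causes no
carries, so the numerical semigroup generated by the numerals of the five vectors has the same
factorizations below the numeral `x` of `(c,c,c)`, giving `AS T x = {a+1, b+1, c}`. Its
complement is finite since it contains the consecutive numerals of `(1,1,0)` and `(1,1,1)`.
-/

theorem finite_setOf_notMem_of_mem_of_succ_mem {T : AddSubmonoid ℕ} {M : ℕ} (hM : 1 < M)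
    (h : M ∈ T) (h' : M + 1 ∈ T) : {n | n ∉ T}.Finite := by
  have hF := frobeniusNumber_pair (Nat.coprime_self_add_right.mpr (Nat.coprime_one_right M)) hM
    (by omega)
  refine (Set.finite_Iic (M * (M + 1) - M - (M + 1))).subset fun n hn => ?_
  by_contra hlt
  exact hn <| AddSubmonoid.closure_le.mpr (by simp [Set.insert_subset_iff, h, h'])
    ((frobeniusNumber_iff.mp hF).2 n (not_le.mp hlt))

theorem mem_of_numAtom_closure {G : Set ℕ} {a : ℕ} (ha : NumAtom (AddSubmonoid.closure G) a) :
    a ∈ G := by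
  obtain ⟨haT, ha0, hirr⟩ := ha
  have key : ∀ x ∈ AddSubmonoid.closure G, x = 0 ∨ x ∈ G ∨ ∃ b c,
      b ∈ AddSubmonoid.closure G ∧ c ∈ AddSubmonoid.closure G ∧ b ≠ 0 ∧ c ≠ 0 ∧ x = b + c := by
    intro x hx
    induction hx using AddSubmonoid.closure_induction with
    | mem x hx => exact .inr (.inl hx)
    | zero => exact .inl rfl
    | add x y hx hy ihx ihy =>
      rcases eq_or_ne x 0 with rfl | hx0
      · simpa using ihy
      rcases eq_or_ne y 0 with rfl | hy0
      · simpa using ihx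
      exact .inr (.inr ⟨x, y, hx, hy, hx0, hy0, rfl⟩)
  exact ((key a haT).resolve_left ha0).resolve_right hirr

theorem numAtom_closure_of_card_le_one {G : Set ℕ} {g : ℕ} (hg : g ∈ G) (hg0 : g ≠ 0)
    (h : ∀ s : Multiset ℕ, (∀ y ∈ s, y ∈ G) → s.sum = g → Multiset.card s ≤ 1) :
    NumAtom (AddSubmonoid.closure G) g := by
  refine ⟨AddSubmonoid.subset_closure hg, hg0, ?_⟩
  rintro ⟨b, c, hb, hc, hb0, hc0, rfl⟩
  obtain ⟨sb, hsb, rfl⟩ := AddSubmonoid.exists_multiset_of_mem_closure hb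
  obtain ⟨sc, hsc, rfl⟩ := AddSubmonoid.exists_multiset_of_mem_closure hc
  have hcard := h (sb + sc) (by simpa [or_imp, forall_and] using ⟨hsb, hsc⟩) (Multiset.sum_add _ _)
  have hsb0 : 0 < Multiset.card sb := Multiset.card_pos.mpr (by rintro rfl; simp at hb0)
  have hsc0 : 0 < Multiset.card sc := Multiset.card_pos.mpr (by rintro rfl; simp at hc0)
  rw [Multiset.card_add] at hcard
  omega

theorem Multiset.exists_eq_sum_replicate {α ι : Type*} [Fintype ι] {v : ι → α} {s : Multiset α}
    (hs : ∀ x ∈ s, x ∈ Set.range v) : ∃ k : ι → ℕ, s = ∑ i, replicate (k i) (v i) := by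
  classical
  induction s using Multiset.induction_on with
  | empty => exact ⟨0, by simp⟩
  | cons a t ih =>
    obtain ⟨k, rfl⟩ := ih fun x hx => hs x (mem_cons_of_mem hx)
    obtain ⟨i₀, rfl⟩ := hs a (mem_cons_self _ _)
    refine ⟨k + Pi.single i₀ 1, ?_⟩
    have hsingle : ∑ i, replicate ((Pi.single i₀ 1 : ι → ℕ) i) (v i) = {v i₀} := by
      rw [Finset.sum_eq_single i₀ (fun i _ hi => by simp [hi]) (by simp)]
      simp
    simp only [Pi.add_apply, replicate_add, Finset.sum_add_distrib, hsingle]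
    rw [add_comm, singleton_add]

theorem sum_mem_AS {T : AddSubmonoid ℕ} {ι : Type*} [Fintype ι] {v : ι → ℕ}
    (hv : ∀ i, NumAtom T (v i)) (k : ι → ℕ) : ∑ i, k i ∈ AS T (∑ i, k i * v i) := by
  refine ⟨∑ i, Multiset.replicate (k i) (v i), fun y hy => ?_, by simp, by simp [Multiset.sum_sum]⟩
  obtain ⟨i, -, hi⟩ := Multiset.mem_sum.mp hy
  rw [Multiset.eq_of_mem_replicate hi]
  exact hv i

theorem mem_of_mem_AS {T : AddSubmonoid ℕ} {x n : ℕ} (h : n ∈ AS T x) : x ∈ T := by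
  obtain ⟨s, hs, -, rfl⟩ := h
  exact AddSubmonoid.multiset_sum_mem _ _ fun y hy => (hs y hy).1

def ofDigits3 (B : ℕ) : ℕ × ℕ × ℕ →+ ℕ where
  toFun v := v.1 * B ^ 2 + v.2.1 * B + v.2.2
  map_zero' := by simp
  map_add' v w := by simp only [Prod.fst_add, Prod.snd_add]; ring

theorem ofDigits3_apply (B : ℕ) (v : ℕ × ℕ × ℕ) :
    ofDigits3 B v = v.1 * B ^ 2 + v.2.1 * B + v.2.2 := rfl

theorem fst_mul_sq_le_ofDigits3 (B : ℕ) (v : ℕ × ℕ × ℕ) : v.1 * B ^ 2 ≤ ofDigits3 B v := by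
  rw [ofDigits3_apply, add_assoc]
  exact Nat.le_add_right _ _

theorem eq_of_mul_add_eq_mul_add {B q r q' r' : ℕ} (hr : r < B) (hr' : r' < B)
    (h : q * B + r = q' * B + r') : q = q' ∧ r = r' := by
  have hB : 0 < B := by omega
  have e := (Nat.div_mod_unique hB (a := q * B + r) (d := q) (c := r)).mpr ⟨by ring, hr⟩
  have e' := (Nat.div_mod_unique hB (a := q' * B + r') (d := q') (c := r')).mpr ⟨by ring, hr'⟩
  rw [h] at e
  exact ⟨e.1.symm.trans e'.1, e.2.symm.trans e'.2⟩

theorem ofDigits3_sum_smul {ι : Type*} [Fintype ι] (B : ℕ) (k : ι → ℕ) (v : ι → ℕ × ℕ × ℕ) :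
    ofDigits3 B (∑ i, k i • v i) = ∑ i, k i * ofDigits3 B (v i) := by
  simp only [map_sum, map_nsmul, smul_eq_mul]

theorem ofDigits3_inj {B : ℕ} {v w : ℕ × ℕ × ℕ} (hv₁ : v.2.1 < B) (hv₂ : v.2.2 < B)
    (hw₁ : w.2.1 < B) (hw₂ : w.2.2 < B) (h : ofDigits3 B v = ofDigits3 B w) : v = w := by
  obtain ⟨x, y, z⟩ := v
  obtain ⟨x', y', z'⟩ := w
  simp only [ofDigits3_apply, sq, ← mul_assoc, ← add_mul] at h hv₁ hv₂ hw₁ hw₂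
  obtain ⟨hxy, rfl⟩ := eq_of_mul_add_eq_mul_add hv₂ hw₂ h
  obtain ⟨rfl, rfl⟩ := eq_of_mul_add_eq_mul_add hv₁ hw₁ hxy
  rfl

/-- Each summand has leading digit at least `1`, so there are at most `c` of them and every digit
of the sum stays below the base `c ^ 2 + 1`: no carries occur. -/
theorem sum_smul_eq_of_ofDigits3_eq {ι : Type*} [Fintype ι] {c : ℕ} {v : ι → ℕ × ℕ × ℕ}
    {t : ℕ × ℕ × ℕ} {k : ι → ℕ} (hv : ∀ i, v i ≤ (c, c, c)) (hv₁ : ∀ i, 1 ≤ (v i).1)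
    (ht : t ≤ (c, c, c))
    (h : ofDigits3 (c ^ 2 + 1) (∑ i, k i • v i) = ofDigits3 (c ^ 2 + 1) t) :
    ∑ i, k i • v i = t := by
  set B := c ^ 2 + 1
  set w := ∑ i, k i • v i
  obtain ⟨htc₀, htc₁, htc₂⟩ : t.1 ≤ c ∧ t.2.1 ≤ c ∧ t.2.2 ≤ c := by
    simpa [Prod.le_def] using ht
  have hcount : ∑ i, k i ≤ w.1 := by
    simp only [w, Prod.fst_sum, Prod.smul_fst, smul_eq_mul]
    exact Finset.sum_le_sum fun i _ => Nat.le_mul_of_pos_right _ (hv₁ i)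
  have hw : w ≤ (∑ i, k i) • (c, c, c) := by
    simp only [w, Finset.sum_smul]
    exact Finset.sum_le_sum fun i _ => nsmul_le_nsmul_right (hv i) _
  obtain ⟨-, hw₁, hw₂⟩ : w.1 ≤ (∑ i, k i) * c ∧ w.2.1 ≤ (∑ i, k i) * c ∧
      w.2.2 ≤ (∑ i, k i) * c := by
    simpa [Prod.le_def] using hw
  have hcB' : c + 1 ≤ B := by simp only [B]; nlinarith
  have hcB : c * B + c < B ^ 2 := by nlinarith
  have hcount_le : ∑ i, k i ≤ c := by
    have htB : ofDigits3 B t < (c + 1) * B ^ 2 := by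
      rw [ofDigits3_apply]
      nlinarith [Nat.mul_le_mul_right (B ^ 2) htc₀, Nat.mul_le_mul_right B htc₁]
    have := fst_mul_sq_le_ofDigits3 B w
    rw [h] at this
    have : w.1 < c + 1 := Nat.lt_of_mul_lt_mul_right (this.trans_lt htB)
    omega
  have hcc : (∑ i, k i) * c < B := by
    have := Nat.mul_le_mul_right c hcount_le
    simp only [B]
    nlinarith
  exact ofDigits3_inj (by omega) (by omega) (by omega) (by omega) h

section Construction

variable {a b c : ℕ}

def atomVec (a b c : ℕ) : Fin 5 → ℕ × ℕ × ℕ :=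
  ![(1, 1, 1), (1, 1, 0), (1, 0, 1), (c - a, c - a, c), (c - b, c, c - b)]

theorem sum_smul_atomVec (k : Fin 5 → ℕ) : ∑ i, k i • atomVec a b c i =
    (k 0 + k 1 + k 2 + k 3 * (c - a) + k 4 * (c - b),
      k 0 + k 1 + k 3 * (c - a) + k 4 * c,
      k 0 + k 2 + k 3 * c + k 4 * (c - b)) := by
  ext <;> simp [Fin.sum_univ_five, atomVec]

theorem atomVec_le (hac : a < c) (i : Fin 5) : atomVec a b c i ≤ (c, c, c) := by
  fin_cases i <;> simp [atomVec, Prod.le_def] <;> omega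

theorem one_le_atomVec_fst (hac : a < c) (hbc : b < c) (i : Fin 5) : 1 ≤ (atomVec a b c i).1 := by
  fin_cases i <;> simp [atomVec] <;> omega

theorem sum_eq_of_sum_smul_atomVec_eq_diag (hac : a < c) (hbc : b < c) {k : Fin 5 → ℕ}
    (h : ∑ i, k i • atomVec a b c i = (c, c, c)) :
    ∑ i, k i = a + 1 ∨ ∑ i, k i = b + 1 ∨ ∑ i, k i = c := by
  rw [sum_smul_atomVec, Prod.mk.injEq, Prod.mk.injEq] at h
  obtain ⟨h₀, h₁, h₂⟩ := h
  have hac' : k 3 * c = k 3 * a + k 3 * (c - a) := by rw [← mul_add]; congr 1; omega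
  have hbc' : k 4 * c = k 4 * b + k 4 * (c - b) := by rw [← mul_add]; congr 1; omega
  have hk₁ : k 1 = k 3 * a := by omega
  have hk₂ : k 2 = k 4 * b := by omega
  have hk₀ : k 0 + (k 3 + k 4) * c = c := by rw [add_mul]; omega
  have hk₃₄ : k 3 + k 4 ≤ 1 := by
    by_contra! hlt
    nlinarith
  simp only [Fin.sum_univ_five]
  obtain ⟨h₃, h₄⟩ | ⟨h₃, h₄⟩ | ⟨h₃, h₄⟩ : k 3 = 0 ∧ k 4 = 0 ∨ k 3 = 1 ∧ k 4 = 0 ∨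
      k 3 = 0 ∧ k 4 = 1 := by omega
  all_goals simp only [h₃, h₄] at hk₀ hk₁ hk₂ ⊢; omega

theorem sum_le_one_of_sum_smul_atomVec_eq (ha : 0 < a) (hb : 0 < b) (hac : a < c) (hbc : b < c)
    {k : Fin 5 → ℕ} (i₀ : Fin 5) (h : ∑ i, k i • atomVec a b c i = atomVec a b c i₀) :
    ∑ i, k i ≤ 1 := by
  rw [sum_smul_atomVec] at h
  have hk₃ : k 3 ≤ k 3 * (c - a) := Nat.le_mul_of_pos_right _ (by omega)
  have hk₄ : k 4 ≤ k 4 * (c - b) := Nat.le_mul_of_pos_right _ (by omega)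
  have hk₃c : k 3 ≤ k 3 * c := Nat.le_mul_of_pos_right _ (by omega)
  have hk₄c : k 4 ≤ k 4 * c := Nat.le_mul_of_pos_right _ (by omega)
  have hac' : k 3 * c = k 3 * a + k 3 * (c - a) := by rw [← mul_add]; congr 1; omega
  have hbc' : k 4 * c = k 4 * b + k 4 * (c - b) := by rw [← mul_add]; congr 1; omega
  simp only [Fin.sum_univ_five]
  fin_cases i₀ <;> simp [atomVec] at h <;> obtain ⟨h₀, h₁, h₂⟩ := h
  · omega
  · omega
  · omega
  · have hk₃a : k 3 * a = a + k 1 := by omega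
    have hk₃1 : k 3 = 1 := by
      have hle : k 3 ≤ 1 :=
        Nat.le_of_mul_le_mul_right (a := k 3) (b := 1) (c := c - a) (by omega) (by omega)
      interval_cases h : k 3 <;> omega
    simp only [hk₃1, one_mul] at h₀ h₁ h₂ ⊢
    omega
  · have hk₄b : k 4 * b = b + k 2 := by omega
    have hk₄1 : k 4 = 1 := by
      have hle : k 4 ≤ 1 :=
        Nat.le_of_mul_le_mul_right (a := k 4) (b := 1) (c := c - b) (by omega) (by omega)
      interval_cases h : k 4 <;> omega
    simp only [hk₄1, one_mul] at h₀ h₁ h₂ ⊢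
    omega

def atomVal (a b c : ℕ) (i : Fin 5) : ℕ := ofDigits3 (c ^ 2 + 1) (atomVec a b c i)

def lengthSemigroup (a b c : ℕ) : AddSubmonoid ℕ :=
  AddSubmonoid.closure (Set.range (atomVal a b c))

theorem exists_sum_smul_atomVec_eq_of_sum_eq (hac : a < c) (hbc : b < c) {s : Multiset ℕ}
    (hs : ∀ y ∈ s, y ∈ Set.range (atomVal a b c)) {t : ℕ × ℕ × ℕ} (ht : t ≤ (c, c, c))
    (hsum : s.sum = ofDigits3 (c ^ 2 + 1) t) :
    ∃ k : Fin 5 → ℕ, ∑ i, k i • atomVec a b c i = t ∧ Multiset.card s = ∑ i, k i := by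
  obtain ⟨k, rfl⟩ := Multiset.exists_eq_sum_replicate hs
  refine ⟨k, sum_smul_eq_of_ofDigits3_eq (atomVec_le hac) (one_le_atomVec_fst hac hbc) ht ?_,
    by simp⟩
  rw [← hsum, ofDigits3_sum_smul]
  simp [Multiset.sum_sum, atomVal]

theorem numAtom_atomVal (ha : 0 < a) (hb : 0 < b) (hac : a < c) (hbc : b < c) (i₀ : Fin 5) :
    NumAtom (lengthSemigroup a b c) (atomVal a b c i₀) := by
  refine numAtom_closure_of_card_le_one ⟨i₀, rfl⟩ ?_ fun s hs hsum => ?_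
  · refine Nat.pos_iff_ne_zero.mp (lt_of_lt_of_le ?_ (fst_mul_sq_le_ofDigits3 _ _))
    exact Nat.mul_pos (one_le_atomVec_fst hac hbc i₀) (by positivity)
  · obtain ⟨k, hk, hcard⟩ :=
      exists_sum_smul_atomVec_eq_of_sum_eq hac hbc hs (atomVec_le hac i₀) hsum
    exact hcard ▸ sum_le_one_of_sum_smul_atomVec_eq ha hb hac hbc i₀ hk

theorem sum_mem_AS_lengthSemigroup (ha : 0 < a) (hb : 0 < b) (hac : a < c) (hbc : b < c)
    {k : Fin 5 → ℕ} {t : ℕ × ℕ × ℕ} (h : ∑ i, k i • atomVec a b c i = t) :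
    ∑ i, k i ∈ AS (lengthSemigroup a b c) (ofDigits3 (c ^ 2 + 1) t) := by
  rw [← h, ofDigits3_sum_smul]
  exact sum_mem_AS (numAtom_atomVal ha hb hac hbc) k

theorem AS_lengthSemigroup_diag (ha : 0 < a) (hb : 0 < b) (hac : a < c) (hbc : b < c) :
    AS (lengthSemigroup a b c) (ofDigits3 (c ^ 2 + 1) (c, c, c)) = {a + 1, b + 1, c} := by
  ext n
  refine ⟨fun ⟨s, hs, hcard, hsum⟩ => ?_, ?_⟩
  · obtain ⟨k, hk, hcard'⟩ := exists_sum_smul_atomVec_eq_of_sum_eq hac hbc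
      (fun y hy => mem_of_numAtom_closure (hs y hy)) le_rfl hsum
    exact hcard ▸ hcard' ▸ sum_eq_of_sum_smul_atomVec_eq_diag hac hbc hk
  · rintro (hn | hn | hn) <;> rw [hn]
    · simpa [Fin.sum_univ_five] using sum_mem_AS_lengthSemigroup ha hb hac hbc
        (k := ![0, a, 0, 1, 0]) (by rw [sum_smul_atomVec]; simp; omega)
    · simpa [Fin.sum_univ_five] using sum_mem_AS_lengthSemigroup ha hb hac hbc
        (k := ![0, 0, b, 0, 1]) (by rw [sum_smul_atomVec]; simp; omega)
    · simpa [Fin.sum_univ_five] using sum_mem_AS_lengthSemigroup ha hb hac hbc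
        (k := ![c, 0, 0, 0, 0]) (by rw [sum_smul_atomVec]; simp)

theorem exists_AS_eq (ha : 0 < a) (hb : 0 < b) (hac : a < c) (hbc : b < c) :
    ∃ T : AddSubmonoid ℕ, {n | n ∉ T}.Finite ∧ ∃ x ∈ T, AS T x = {a + 1, b + 1, c} := by
  have hAS := AS_lengthSemigroup_diag ha hb hac hbc
  have hval₁ : atomVal a b c 1 = (c ^ 2 + 1) ^ 2 + (c ^ 2 + 1) := by
    simp [atomVal, atomVec, ofDigits3_apply]
  have hval₀ : atomVal a b c 0 = atomVal a b c 1 + 1 := by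
    simp [atomVal, atomVec, ofDigits3_apply]
  refine ⟨lengthSemigroup a b c, finite_setOf_notMem_of_mem_of_succ_mem ?_
    (AddSubmonoid.subset_closure ⟨1, rfl⟩) (hval₀ ▸ AddSubmonoid.subset_closure ⟨0, rfl⟩),
    _, mem_of_mem_AS (n := c) (by simp [hAS]), hAS⟩
  rw [hval₁]
  nlinarith

end Construction

theorem Finset.exists_eq_triple_of_card_le_three {α : Type*} [LinearOrder α] {S : Finset α}
    (hS : S.Nonempty) (h3 : S.card ≤ 3) : ∃ m m' c, m ≤ c ∧ m' ≤ c ∧ S = {m, m', c} := by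
  set c := S.max' hS
  have hc : c ∈ S := S.max'_mem hS
  have hle : ∀ x ∈ S.erase c, x ≤ c := fun x hx => S.le_max' x (Finset.mem_of_mem_erase hx)
  have hcard : (S.erase c).card ≤ 2 := by rw [Finset.card_erase_of_mem hc]; omega
  rw [← Finset.insert_erase hc]
  interval_cases h : (S.erase c).card
  · exact ⟨c, c, c, le_rfl, le_rfl, by simp [Finset.card_eq_zero.mp h]⟩
  · obtain ⟨m, hm⟩ := Finset.card_eq_one.mp h
    exact ⟨m, m, c, hle m (by simp [hm]), hle m (by simp [hm]), by rw [hm]; ext; simp; tauto⟩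
  · obtain ⟨m, m', -, hm⟩ := Finset.card_eq_two.mp h
    exact ⟨m, m', c, hle m (by simp [hm]), hle m' (by simp [hm]), by rw [hm]; ext; simp; tauto⟩

theorem stmt_18 (S : Finset ℕ) (hS : ∀ m ∈ S, 2 ≤ m) (h1 : 1 ≤ S.card) (h3 : S.card ≤ 3) :
    ∃ T : AddSubmonoid ℕ, (Set.Finite {m : ℕ | m ∉ T}) ∧
      ∃ x ∈ T, AS T x = ↑S := by
  obtain ⟨m, m', c, hmc, hm'c, rfl⟩ :=
    Finset.exists_eq_triple_of_card_le_three (Finset.card_pos.mp h1) h3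
  have hm : 2 ≤ m := hS m (by simp)
  have hm' : 2 ≤ m' := hS m' (by simp)
  obtain ⟨T, hT, x, hx, hAS⟩ :=
    exists_AS_eq (a := m - 1) (b := m' - 1) (c := c) (by omega) (by omega) (by omega) (by omega)
  refine ⟨T, hT, x, hx, ?_⟩
  rw [hAS, Nat.sub_add_cancel (by omega), Nat.sub_add_cancel (by omega)]
  simp
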